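/- arXiv:2412.19121 — 4 statements merged into one kernel-verified Lean document; each statement's English description precedes it below -/
import Mathlib

section
/- Let (Ω, 𝒜, P) be a probability space and 𝒟, 𝒢 independent sub-σ-algebras of 𝒜. Let (E, ℰ) be a measurable space and Y : Ω → E be measurable with respect to 𝒟. Assume φ : E × Ω → ℝ^d is measurable with respect to the product σ-algebra ℰ ⊗ 𝒢 and that ω ↦ φ(Y(ω), ω) is integrable. Let N := {x ∈ E : φ(x, ·) is not integrable} and let μ be the law of Y on (E, ℰ). Then N ∈ ℰ and μ(N) = 0. -/
/-!
Since `Y` is independent of `𝒢`, the law of `ω ↦ (Y ω, ω)` on `E × (Ω, 𝒢)` is the product of the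
law of `Y` with the restriction of `P` to `𝒢`. Integrability of `φ (Y ·, ·)` is therefore
integrability of `φ` for this product measure, and Fubini makes almost every section `φ (x, ·)`
integrable. Measurability of the exceptional set is the measurability of sections of a jointly
measurable function.
-/

open MeasureTheory ProbabilityTheory

namespace MeasureTheory

theorem integrable_trim_iff {Ω F : Type*} [NormedAddCommGroup F] {m m0 : MeasurableSpace Ω}
    {μ : Measure Ω} (hm : m ≤ m0) {f : Ω → F} (hf : StronglyMeasurable[m] f) :
    Integrable f (μ.trim hm) ↔ Integrable f μ :=
  ⟨integrable_of_integrable_trim hm, fun h => h.trim hm hf⟩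

end MeasureTheory

namespace ProbabilityTheory

theorem IndepFun.ae_integrable_section {Ω E Ω' F : Type*} {mΩ : MeasurableSpace Ω}
    {mE : MeasurableSpace E} {mΩ' : MeasurableSpace Ω'} [NormedAddCommGroup F] {P : Measure Ω}
    [IsFiniteMeasure P] {Y : Ω → E} {Z : Ω → Ω'} (hY : AEMeasurable Y P) (hZ : AEMeasurable Z P)
    (hYZ : IndepFun Y Z P) {φ : E × Ω' → F} (hφ : StronglyMeasurable φ)
    (hint : Integrable (fun ω => φ (Y ω, Z ω)) P) :
    ∀ᵐ x ∂P.map Y, Integrable (fun z => φ (x, z)) (P.map Z) := by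
  have hprod : Integrable φ ((P.map Y).prod (P.map Z)) := by
    rw [← (indepFun_iff_map_prod_eq_prod_map_map hY hZ).mp hYZ]
    exact (integrable_map_measure hφ.aestronglyMeasurable (hY.prodMk hZ)).mpr hint
  exact hprod.prod_right_ae

end ProbabilityTheory

theorem stmt_0 {Ω : Type*} (𝒟 𝒢 : MeasurableSpace Ω) [m𝒜 : MeasurableSpace Ω]
    (P : Measure Ω) [IsProbabilityMeasure P]
    (h𝒟 : 𝒟 ≤ m𝒜) (h𝒢 : 𝒢 ≤ m𝒜)
    (hindep : ProbabilityTheory.Indep 𝒟 𝒢 P)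
    {E : Type*} [mE : MeasurableSpace E] (Y : Ω → E) (hY : Measurable[𝒟] Y)
    (d : ℕ) (φ : E × Ω → EuclideanSpace ℝ (Fin d))
    (hφ : Measurable[mE.prod 𝒢] φ)
    (hint : Integrable (fun ω => φ (Y ω, ω)) P) :
    MeasurableSet {x : E | ¬ Integrable (fun ω => φ (x, ω)) P} ∧
      P.map Y {x : E | ¬ Integrable (fun ω => φ (x, ω)) P} = 0 := by
  have hsection (x : E) :
      Integrable (fun ω => φ (x, ω)) (P.trim h𝒢) ↔ Integrable (fun ω => φ (x, ω)) P :=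
    integrable_trim_iff h𝒢 (hφ.stronglyMeasurable.comp_measurable measurable_prodMk_left)
  -- `id : (Ω, m𝒜) → (Ω, 𝒢)` has law `P.trim h𝒢` and is independent of `Y`.
  have hYid : @IndepFun Ω E Ω m𝒜 mE 𝒢 Y id P :=
    indep_of_indep_of_le_right (indep_of_indep_of_le_left hindep hY.comap_le)
      MeasurableSpace.comap_id.le
  have hae := hYid.ae_integrable_section (hY.mono h𝒟 le_rfl).aemeasurable
    (aemeasurable_id'' P h𝒢) hφ.stronglyMeasurable hint
  rw [← trim_eq_map h𝒢] at hae
  simp_rw [← hsection]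
  exact ⟨(measurableSet_integrable (f := fun x ω => φ (x, ω)) hφ.stronglyMeasurable).compl,
    ae_iff.mp hae⟩
end

section
/- Let (Ω, 𝒜, P) be a probability space and 𝒟, 𝒢 independent sub-σ-algebras of 𝒜. Let (E, ℰ) be a measurable space and Y : Ω → E be measurable with respect to 𝒟. Assume φ : E × Ω → ℝ^d is measurable with respect to the product σ-algebra ℰ ⊗ 𝒢 and that ω ↦ φ(Y(ω), ω) is integrable. Let N := {x ∈ E : φ(x, ·) is not integrable}, and define Φ : E → ℝ^d by Φ(y) := 0 for y ∈ N and Φ(y) := E[φ(y, ·)] for y ∉ N. Then Φ is ℰ-measurable and the conditional expectation of ω ↦ φ(Y(ω), ω) given 𝒟 equals Φ(Y) P-almost surely. -/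
open MeasureTheory ProbabilityTheory
open scoped Classical

/-! Freezing lemma. If `Y` is `𝒟`-measurable and `Z` is independent of `𝒟`, then on every
`A ∈ 𝒟` the joint law of `(Y, Z)` under `P` restricted to `A` is the product of the law of `Y`
under `P` restricted to `A` with the law of `Z`. Fubini then identifies `∫_A φ(Y, Z) dP` with
`∫_A Φ(Y) dP`, where `Φ(y) = E[φ(y, Z)]`, and `Φ(Y)` is `𝒟`-measurable, so it is the conditional
expectation. The theorem is the case `Z = id : (Ω, 𝒜) → (Ω, 𝒢)`; the case distinction in `Φ` is
just the convention that the Bochner integral of a non-integrable function is `0`. -/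

namespace ProbabilityTheory

variable {α E β F : Type*} {m mα : MeasurableSpace α} [MeasurableSpace E] {mβ : MeasurableSpace β}
  {μ : Measure α} {Y : α → E} {Z : α → β}

theorem map_prodMk_restrict_eq_prod_of_indep [IsFiniteMeasure μ] (hm : m ≤ mα)
    (hY : Measurable[m] Y) (hZ : Measurable Z) (hindep : Indep m (mβ.comap Z) μ)
    {s : Set α} (hs : MeasurableSet[m] s) :
    (μ.restrict s).map (fun a => (Y a, Z a)) = ((μ.restrict s).map Y).prod (μ.map Z) := by
  have hY' : Measurable Y := hY.mono hm le_rfl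
  refine (Measure.prod_eq fun A B hA hB => ?_).symm
  rw [Measure.map_apply (hY'.prodMk hZ) (hA.prod hB), Set.mk_preimage_prod,
    Measure.restrict_apply ((hY' hA).inter (hZ hB)), Measure.map_apply hY' hA,
    Measure.restrict_apply (hY' hA), Measure.map_apply hZ hB, Set.inter_right_comm]
  exact (Indep_iff _ _ _).1 hindep _ _ ((hY hA).inter hs) ⟨B, hB, rfl⟩

variable [NormedAddCommGroup F] [NormedSpace ℝ F] {φ : E × β → F}

theorem integrable_integral_comp_prodMk_of_indep [IsFiniteMeasure μ] (hm : m ≤ mα)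
    (hY : Measurable[m] Y) (hZ : Measurable Z) (hindep : Indep m (mβ.comap Z) μ)
    (hφ : StronglyMeasurable φ) (hint : Integrable (fun a => φ (Y a, Z a)) μ) :
    Integrable (fun a => ∫ b, φ (Y a, b) ∂μ.map Z) μ := by
  have hY' : Measurable Y := hY.mono hm le_rfl
  have hφ_prod : Integrable φ ((μ.map Y).prod (μ.map Z)) := by
    have hlaw := map_prodMk_restrict_eq_prod_of_indep hm hY hZ hindep MeasurableSet.univ
    rw [Measure.restrict_univ] at hlaw
    rw [← hlaw]
    exact (integrable_map_measure hφ.aestronglyMeasurable (hY'.prodMk hZ).aemeasurable).2 hint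
  exact (integrable_map_measure hφ.integral_prod_right'.aestronglyMeasurable
    hY'.aemeasurable).1 hφ_prod.integral_prod_left

theorem setIntegral_integral_comp_prodMk_of_indep [IsFiniteMeasure μ] (hm : m ≤ mα)
    (hY : Measurable[m] Y) (hZ : Measurable Z) (hindep : Indep m (mβ.comap Z) μ)
    (hφ : StronglyMeasurable φ) (hint : Integrable (fun a => φ (Y a, Z a)) μ)
    {s : Set α} (hs : MeasurableSet[m] s) :
    ∫ a in s, (∫ b, φ (Y a, b) ∂μ.map Z) ∂μ = ∫ a in s, φ (Y a, Z a) ∂μ := by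
  have hY' : Measurable Y := hY.mono hm le_rfl
  have hlaw := map_prodMk_restrict_eq_prod_of_indep hm hY hZ hindep hs
  have hφ_prod : Integrable φ (((μ.restrict s).map Y).prod (μ.map Z)) := by
    rw [← hlaw]
    exact (integrable_map_measure hφ.aestronglyMeasurable
      (hY'.prodMk hZ).aemeasurable).2 hint.restrict
  calc ∫ a in s, (∫ b, φ (Y a, b) ∂μ.map Z) ∂μ
      = ∫ x, (∫ b, φ (x, b) ∂μ.map Z) ∂(μ.restrict s).map Y :=
        (integral_map hY'.aemeasurable hφ.integral_prod_right'.aestronglyMeasurable).symm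
    _ = ∫ z, φ z ∂(((μ.restrict s).map Y).prod (μ.map Z)) := (integral_prod _ hφ_prod).symm
    _ = ∫ a in s, φ (Y a, Z a) ∂μ := by
        rw [← hlaw, integral_map (hY'.prodMk hZ).aemeasurable hφ.aestronglyMeasurable]

theorem condExp_comp_prodMk_ae_eq_integral_of_indep [CompleteSpace F] [IsFiniteMeasure μ]
    (hm : m ≤ mα) (hY : Measurable[m] Y) (hZ : Measurable Z) (hindep : Indep m (mβ.comap Z) μ)
    (hφ : StronglyMeasurable φ) (hint : Integrable (fun a => φ (Y a, Z a)) μ) :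
    μ[fun a => φ (Y a, Z a) | m] =ᵐ[μ] fun a => ∫ b, φ (Y a, b) ∂μ.map Z := by
  have hΨ : StronglyMeasurable[m] fun a => ∫ b, φ (Y a, b) ∂μ.map Z :=
    hφ.integral_prod_right'.comp_measurable hY
  exact (ae_eq_condExp_of_forall_setIntegral_eq hm hint
    (fun _ _ _ => (integrable_integral_comp_prodMk_of_indep hm hY hZ hindep hφ hint).integrableOn)
    (fun _ hs _ => setIntegral_integral_comp_prodMk_of_indep hm hY hZ hindep hφ hint hs)
    hΨ.aestronglyMeasurable).symm

end ProbabilityTheory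

theorem stmt_1 {Ω : Type*} (𝒟 𝒢 : MeasurableSpace Ω) [m𝒜 : MeasurableSpace Ω]
    (P : Measure Ω) [IsProbabilityMeasure P]
    (h𝒟 : 𝒟 ≤ m𝒜) (h𝒢 : 𝒢 ≤ m𝒜)
    (hindep : ProbabilityTheory.Indep 𝒟 𝒢 P)
    {E : Type*} [mE : MeasurableSpace E] (Y : Ω → E) (hY : Measurable[𝒟] Y)
    (d : ℕ) (φ : E × Ω → EuclideanSpace ℝ (Fin d))
    (hφ : Measurable[mE.prod 𝒢] φ)
    (hint : Integrable (fun ω => φ (Y ω, ω)) P)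
    (Φ : E → EuclideanSpace ℝ (Fin d))
    (hΦdef : ∀ x : E, Φ x =
      if Integrable (fun ω => φ (x, ω)) P then ∫ ω, φ (x, ω) ∂P else 0) :
    Measurable Φ ∧ P[fun ω => φ (Y ω, ω)|𝒟] =ᵐ[P] fun ω => Φ (Y ω) := by
  -- `Ω` carries both `m𝒜` and `𝒢`, so the σ-algebras are passed explicitly where they clash.
  have hid : Measurable[m𝒜, 𝒢] id := measurable_id'' h𝒢
  have hφs : StronglyMeasurable[mE.prod 𝒢] φ := hφ.stronglyMeasurable
  have hΦ : Φ = fun x => ∫ ω, φ (x, ω) ∂(@Measure.map Ω Ω m𝒜 𝒢 id P) := by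
    funext x
    rw [hΦdef, @integral_map Ω _ _ _ m𝒜 P Ω 𝒢 id ⟨id, hid, .rfl⟩ (fun ω => φ (x, ω))
      (hφs.comp_measurable (@measurable_prodMk_left E Ω mE 𝒢 x)).aestronglyMeasurable]
    split_ifs with hx
    · rfl
    · exact (integral_undef hx).symm
  subst hΦ
  refine ⟨(@StronglyMeasurable.integral_prod_right' E Ω _ mE 𝒢 _ _ _ _ _ hφs).measurable, ?_⟩
  rw [← MeasurableSpace.comap_id (m := 𝒢)] at hindep
  exact condExp_comp_prodMk_ae_eq_integral_of_indep h𝒟 hY hid hindep hφs hint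
end

section
/- Let α ∈ (0, 1) and T > 0. There exists a constant c > 0 (depending only on d, T, α) such that for all t ∈ (0, T] and all x, y ∈ ℝ^d: |∇p_t(x) − ∇p_t(y)| ≤ c · |x − y|^α · t^(−(1+α)/2) · (p_{4t}(x) + p_{4t}(y)). -/
open Real MeasureTheory

/-- The Gaussian heat kernel `p_t(x) = (4πt)^(-d/2) exp(-|x|²/(4t))`. -/
noncomputable def heatKernel (d : ℕ) (t : ℝ) (x : EuclideanSpace ℝ (Fin d)) : ℝ :=
  (4 * Real.pi * t) ^ (-(d : ℝ) / 2) * Real.exp (-‖x‖ ^ 2 / (4 * t))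

/-- The spatial gradient of the Gaussian heat kernel: `∇p_t(x) = -(x/(2t)) p_t(x)`. -/
noncomputable def heatKernelGrad (d : ℕ) (t : ℝ) (x : EuclideanSpace ℝ (Fin d)) :
    EuclideanSpace ℝ (Fin d) :=
  (-(heatKernel d t x) / (2 * t)) • x

/-!
Splitting off part of the Gaussian gives `p_t(x) = 4^{d/2} e^{-3|x|²/(16t)} p_{4t}(x)`, and the
factor `e^{-3|x|²/(16t)}` absorbs a weight `|x|²` at the cost of a factor `t`. Hence
`|∇p_t(x)| ≲ t^{-1/2} p_{4t}(x)`, which bounds the difference of gradients by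
`t^{-1/2} (p_{4t}(x) + p_{4t}(y))`. When `|x - y| ≤ √t`, writing
`2(p(x) x - p(y) y) = (p(x) + p(y))(x - y) + (p(x) - p(y))(x + y)` and
`|e^a - e^b| ≤ |a - b| (e^a + e^b)` gives the Lipschitz bound
`|x - y| t^{-1} (p_{4t}(x) + p_{4t}(y))`.
Interpolating with `min 1 u ≤ u^α` for `u = |x - y| / √t` gives the Hölder bound.
-/

lemma Real.abs_exp_sub_exp_le (a b : ℝ) : |exp a - exp b| ≤ |a - b| * (exp a + exp b) := by
  wlog hba : b ≤ a generalizing a b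
  · rw [abs_sub_comm, abs_sub_comm a, add_comm]
    exact this b a (le_of_not_ge hba)
  have hb : exp a * (b - a + 1) ≤ exp b := by
    calc exp a * (b - a + 1) ≤ exp a * exp (b - a) := by gcongr; exact add_one_le_exp _
      _ = exp b := by rw [← exp_add]; ring_nf
  rw [abs_of_nonneg (sub_nonneg.2 (exp_le_exp.2 hba)), abs_of_nonneg (sub_nonneg.2 hba)]
  nlinarith [exp_pos b]

lemma Real.sq_mul_exp_neg_mul_sq_le {c : ℝ} (hc : 0 < c) (s : ℝ) :
    s ^ 2 * exp (-(c * s ^ 2)) ≤ c⁻¹ := by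
  rw [exp_neg, ← div_eq_mul_inv, div_le_iff₀ (exp_pos _), inv_mul_eq_div, le_div_iff₀ hc]
  nlinarith [add_one_le_exp (c * s ^ 2)]

lemma le_mul_rpow_of_le_of_le_mul {D M u α : ℝ} (hM : 0 ≤ M) (hu : 0 ≤ u) (hα0 : 0 ≤ α)
    (hα1 : α ≤ 1) (hD : D ≤ M) (hDu : u ≤ 1 → D ≤ M * u) : D ≤ M * u ^ α := by
  rcases le_total u 1 with hu1 | hu1
  · exact (hDu hu1).trans (by gcongr; exact Real.self_le_rpow_of_le_one hu hu1 hα1)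
  · exact hD.trans (le_mul_of_one_le_right hM (Real.one_le_rpow hu1 hα0))

section HeatKernel

variable {d : ℕ} {t : ℝ}

lemma heatKernel_nonneg (ht : 0 < t) (x : EuclideanSpace ℝ (Fin d)) : 0 ≤ heatKernel d t x := by
  unfold heatKernel; positivity

lemma heatKernel_eq_mul_heatKernel_four_mul (ht : 0 < t) (x : EuclideanSpace ℝ (Fin d)) :
    heatKernel d t x =
      4 ^ ((d : ℝ) / 2) * exp (-(3 / (16 * t) * ‖x‖ ^ 2)) * heatKernel d (4 * t) x := by
  have hexp : exp (-‖x‖ ^ 2 / (4 * t)) =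
      exp (-(3 / (16 * t) * ‖x‖ ^ 2)) * exp (-‖x‖ ^ 2 / (4 * (4 * t))) := by
    rw [← exp_add]; congr 1; field_simp; ring
  unfold heatKernel
  rw [hexp, show 4 * π * (4 * t) = 4 * (4 * π * t) by ring,
    mul_rpow (x := 4) (y := 4 * π * t) (by norm_num) (by positivity), neg_div,
    rpow_neg (by norm_num : (0 : ℝ) ≤ 4)]
  field_simp

lemma heatKernel_le (ht : 0 < t) (x : EuclideanSpace ℝ (Fin d)) :
    heatKernel d t x ≤ 4 ^ ((d : ℝ) / 2) * heatKernel d (4 * t) x := by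
  rw [heatKernel_eq_mul_heatKernel_four_mul ht]
  have hq := heatKernel_nonneg (d := d) (by positivity : 0 < 4 * t) x
  calc _ ≤ 4 ^ ((d : ℝ) / 2) * 1 * heatKernel d (4 * t) x := by
        gcongr
        exact exp_le_one_iff.2 (neg_nonpos.2 (by positivity))
    _ = _ := by ring

lemma sq_norm_mul_heatKernel_le (ht : 0 < t) (x : EuclideanSpace ℝ (Fin d)) :
    ‖x‖ ^ 2 * heatKernel d t x ≤ 6 * 4 ^ ((d : ℝ) / 2) * t * heatKernel d (4 * t) x := by
  have hmoment := sq_mul_exp_neg_mul_sq_le (by positivity : 0 < 3 / (16 * t)) ‖x‖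
  have hq := heatKernel_nonneg (d := d) (by positivity : 0 < 4 * t) x
  rw [heatKernel_eq_mul_heatKernel_four_mul ht]
  calc _ = 4 ^ ((d : ℝ) / 2) * (‖x‖ ^ 2 * exp (-(3 / (16 * t) * ‖x‖ ^ 2))) *
        heatKernel d (4 * t) x := by ring
    _ ≤ 4 ^ ((d : ℝ) / 2) * (6 * t) * heatKernel d (4 * t) x := by
        gcongr _ * ?_ * _
        refine hmoment.trans ?_
        rw [inv_div, div_le_iff₀ (by norm_num)]
        linarith
    _ = _ := by ring

lemma norm_heatKernelGrad (ht : 0 < t) (x : EuclideanSpace ℝ (Fin d)) :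
    ‖heatKernelGrad d t x‖ = ‖x‖ * heatKernel d t x / (2 * t) := by
  rw [heatKernelGrad, norm_smul, norm_div, norm_neg, Real.norm_of_nonneg (heatKernel_nonneg ht x),
    Real.norm_of_nonneg (by positivity)]
  ring

lemma norm_heatKernelGrad_le (ht : 0 < t) (x : EuclideanSpace ℝ (Fin d)) :
    ‖heatKernelGrad d t x‖ ≤ 2 * 4 ^ ((d : ℝ) / 2) / √t * heatKernel d (4 * t) x := by
  have hs : 0 < √t := sqrt_pos.2 ht
  have hamgm : 2 * √t * ‖x‖ ≤ t + ‖x‖ ^ 2 := by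
    nlinarith [sq_nonneg (‖x‖ - √t), sq_sqrt ht.le]
  have hp := heatKernel_le ht x
  have hp2 := sq_norm_mul_heatKernel_le ht x
  have hq := heatKernel_nonneg (d := d) (by positivity : 0 < 4 * t) x
  have hmoment :
      ‖x‖ * heatKernel d t x * √t ≤ 4 * 4 ^ ((d : ℝ) / 2) * t * heatKernel d (4 * t) x := by
    have hAtq : 0 ≤ 4 ^ ((d : ℝ) / 2) * t * heatKernel d (4 * t) x := by positivity
    nlinarith [mul_le_mul_of_nonneg_right hamgm (heatKernel_nonneg ht x),
      mul_le_mul_of_nonneg_left hp ht.le]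
  rw [norm_heatKernelGrad ht, div_le_iff₀ (by positivity),
    show 2 * 4 ^ ((d : ℝ) / 2) / √t * heatKernel d (4 * t) x * (2 * t) =
      4 * 4 ^ ((d : ℝ) / 2) * t * heatKernel d (4 * t) x / √t by ring, le_div_iff₀ hs]
  exact hmoment

lemma abs_heatKernel_sub_le (ht : 0 < t) (x y : EuclideanSpace ℝ (Fin d)) :
    |heatKernel d t x - heatKernel d t y| ≤
      ‖x - y‖ * (‖x‖ + ‖y‖) / (4 * t) * (heatKernel d t x + heatKernel d t y) := by
  have harg : |-‖x‖ ^ 2 / (4 * t) - -‖y‖ ^ 2 / (4 * t)| ≤ ‖x - y‖ * (‖x‖ + ‖y‖) / (4 * t) := by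
    rw [show -‖x‖ ^ 2 / (4 * t) - -‖y‖ ^ 2 / (4 * t) = (‖y‖ - ‖x‖) * (‖x‖ + ‖y‖) / (4 * t) by
        ring,
      abs_div, abs_mul, abs_of_pos (by positivity : 0 < 4 * t),
      abs_of_nonneg (by positivity : 0 ≤ ‖x‖ + ‖y‖), norm_sub_rev]
    gcongr
    exact abs_norm_sub_norm_le y x
  have hK : 0 < (4 * π * t) ^ (-(d : ℝ) / 2) := by positivity
  unfold heatKernel
  rw [← mul_sub, abs_mul, abs_of_pos hK]
  calc _ ≤ (4 * π * t) ^ (-(d : ℝ) / 2) * (‖x - y‖ * (‖x‖ + ‖y‖) / (4 * t) *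
        (exp (-‖x‖ ^ 2 / (4 * t)) + exp (-‖y‖ ^ 2 / (4 * t)))) := by
        gcongr
        exact (abs_exp_sub_exp_le _ _).trans (by gcongr)
    _ = _ := by ring

lemma heatKernelGrad_sub (x y : EuclideanSpace ℝ (Fin d)) :
    heatKernelGrad d t x - heatKernelGrad d t y = -(4 * t)⁻¹ •
      ((heatKernel d t x + heatKernel d t y) • (x - y) +
        (heatKernel d t x - heatKernel d t y) • (x + y)) := by
  unfold heatKernelGrad
  match_scalars <;> field_simp <;> ring

lemma norm_heatKernelGrad_sub_le (ht : 0 < t) (x y : EuclideanSpace ℝ (Fin d)) :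
    ‖heatKernelGrad d t x - heatKernelGrad d t y‖ ≤
      (‖x - y‖ * (heatKernel d t x + heatKernel d t y) +
        (‖x‖ + ‖y‖) * |heatKernel d t x - heatKernel d t y|) / (4 * t) := by
  have hP : 0 ≤ heatKernel d t x + heatKernel d t y :=
    add_nonneg (heatKernel_nonneg ht x) (heatKernel_nonneg ht y)
  rw [heatKernelGrad_sub, norm_smul, norm_neg, norm_inv, Real.norm_of_nonneg (by positivity),
    inv_mul_eq_div]
  gcongr
  refine (norm_add_le _ _).trans ?_
  rw [norm_smul, norm_smul, Real.norm_of_nonneg hP, Real.norm_eq_abs, mul_comm, mul_comm |_|]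
  gcongr
  exact norm_add_le x y

lemma sq_mul_heatKernel_le_of_le (ht : 0 < t) {ρ : ℝ} {z : EuclideanSpace ℝ (Fin d)}
    (hρ0 : 0 ≤ ρ) (hρ : ρ ≤ 2 * ‖z‖ + √t) :
    ρ ^ 2 * heatKernel d t z ≤ 50 * 4 ^ ((d : ℝ) / 2) * t * heatKernel d (4 * t) z := by
  have hρ2 : ρ ^ 2 ≤ 8 * ‖z‖ ^ 2 + 2 * t := by
    nlinarith [sq_sqrt ht.le, sq_nonneg (2 * ‖z‖ - √t)]
  have hp := heatKernel_le ht z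
  have hp2 := sq_norm_mul_heatKernel_le ht z
  nlinarith [mul_le_mul_of_nonneg_right hρ2 (heatKernel_nonneg ht z),
    mul_le_mul_of_nonneg_left hp ht.le]

lemma norm_heatKernelGrad_sub_le_of_norm_sub_le_sqrt (ht : 0 < t)
    {x y : EuclideanSpace ℝ (Fin d)} (hxy : ‖x - y‖ ≤ √t) :
    ‖heatKernelGrad d t x - heatKernelGrad d t y‖ ≤
      4 * 4 ^ ((d : ℝ) / 2) / √t * (heatKernel d (4 * t) x + heatKernel d (4 * t) y) *
        (‖x - y‖ / √t) := by
  set A : ℝ := 4 ^ ((d : ℝ) / 2)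
  set Q := heatKernel d (4 * t) x + heatKernel d (4 * t) y
  set ρ := ‖x‖ + ‖y‖
  have hnorms := abs_le.1 (abs_norm_sub_norm_le x y)
  have hP : heatKernel d t x + heatKernel d t y ≤ A * Q := by
    linarith [heatKernel_le ht x, heatKernel_le ht y]
  have hρP : ρ ^ 2 * (heatKernel d t x + heatKernel d t y) ≤ 50 * A * t * Q := by
    have hx := sq_mul_heatKernel_le_of_le ht (ρ := ρ) (z := x) (by positivity) (by linarith)
    have hy := sq_mul_heatKernel_le_of_le ht (ρ := ρ) (z := y) (by positivity) (by linarith)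
    linarith
  have hΔ : ρ * |heatKernel d t x - heatKernel d t y| ≤
      ‖x - y‖ * (ρ ^ 2 * (heatKernel d t x + heatKernel d t y)) / (4 * t) := by
    calc _ ≤ ρ * (‖x - y‖ * ρ / (4 * t) * (heatKernel d t x + heatKernel d t y)) := by
          gcongr; exact abs_heatKernel_sub_le ht x y
      _ = _ := by ring
  have hQ : 0 ≤ Q := add_nonneg (heatKernel_nonneg (by positivity) x)
    (heatKernel_nonneg (by positivity) y)
  have hAQ : 0 ≤ A * Q * ‖x - y‖ := by positivity
  calc _ ≤ _ := norm_heatKernelGrad_sub_le ht x y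
    _ ≤ (‖x - y‖ * (A * Q) + ‖x - y‖ * (50 * A * t * Q) / (4 * t)) / (4 * t) := by
        gcongr
        exact hΔ.trans (by gcongr)
    _ = 27 / 8 * (A * Q * ‖x - y‖) / t := by field_simp; ring
    _ ≤ 4 * (A * Q * ‖x - y‖) / t := by gcongr; norm_num
    _ = _ := by field_simp; rw [sq_sqrt ht.le]

end HeatKernel

theorem stmt_6_general (d : ℕ) (α T : ℝ) (hα0 : 0 < α) (hα1 : α < 1) :
    ∃ c : ℝ, 0 < c ∧ ∀ t : ℝ, 0 < t → t ≤ T → ∀ x y : EuclideanSpace ℝ (Fin d),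
      ‖heatKernelGrad d t x - heatKernelGrad d t y‖ ≤
        c * ‖x - y‖ ^ α * t ^ (-(1 + α) / 2) *
          (heatKernel d (4 * t) x + heatKernel d (4 * t) y) := by
  refine ⟨4 * 4 ^ ((d : ℝ) / 2), by positivity, fun t ht _ x y => ?_⟩
  have hs : 0 < √t := sqrt_pos.2 ht
  have hQ : 0 ≤ heatKernel d (4 * t) x + heatKernel d (4 * t) y :=
    add_nonneg (heatKernel_nonneg (by positivity) x) (heatKernel_nonneg (by positivity) y)
  have hbound : ‖heatKernelGrad d t x - heatKernelGrad d t y‖ ≤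
      4 * 4 ^ ((d : ℝ) / 2) / √t * (heatKernel d (4 * t) x + heatKernel d (4 * t) y) := by
    calc _ ≤ _ := norm_sub_le _ _
      _ ≤ 2 * 4 ^ ((d : ℝ) / 2) / √t * (heatKernel d (4 * t) x + heatKernel d (4 * t) y) := by
          rw [mul_add]
          exact add_le_add (norm_heatKernelGrad_le ht x) (norm_heatKernelGrad_le ht y)
      _ ≤ _ := by gcongr; norm_num
  have hscale : (√t)⁻¹ * (‖x - y‖ / √t) ^ α = ‖x - y‖ ^ α * t ^ (-(1 + α) / 2) := by
    rw [div_rpow (norm_nonneg _) hs.le, sqrt_eq_rpow, ← rpow_mul ht.le, ← rpow_neg ht.le,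
      div_eq_mul_inv (‖x - y‖ ^ α), ← rpow_neg ht.le, mul_left_comm, ← rpow_add ht]
    ring_nf
  calc _ ≤ _ := le_mul_rpow_of_le_of_le_mul (by positivity) (by positivity) hα0.le hα1.le hbound
        fun h => norm_heatKernelGrad_sub_le_of_norm_sub_le_sqrt ht ((div_le_one hs).1 h)
    _ = 4 * 4 ^ ((d : ℝ) / 2) * ((√t)⁻¹ * (‖x - y‖ / √t) ^ α) *
          (heatKernel d (4 * t) x + heatKernel d (4 * t) y) := by ring
    _ = _ := by rw [hscale, mul_assoc _ (‖x - y‖ ^ α)]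

theorem stmt_6 (d : ℕ) (α T : ℝ) (hα0 : 0 < α) (hα1 : α < 1) (hT : 0 < T) :
    ∃ c : ℝ, 0 < c ∧ ∀ t : ℝ, 0 < t → t ≤ T → ∀ x y : EuclideanSpace ℝ (Fin d),
      ‖heatKernelGrad d t x - heatKernelGrad d t y‖ ≤
        c * ‖x - y‖ ^ α * t ^ (-(1 + α) / 2) *
          (heatKernel d (4 * t) x + heatKernel d (4 * t) y) :=
  stmt_6_general d α T hα0 hα1
end

section
/- Let α ∈ (0, 1) and T > 0. There exists a constant c > 0 (depending only on d, T, α) such that for all 0 < s < t ≤ T and all x ∈ ℝ^d: |p_t(x) − p_s(x)| ≤ c · (t − s)^(α/2) · (t^(−α/2) · p_{2t}(x) + s^(−α/2) · p_{2s}(x)). -/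
open Real MeasureTheory

/-! With `u = |x|² / (4t)`, the prefactor satisfies `(4πt)^(-d/2) = 2^(d/2) (8πt)^(-d/2)` and
`u e^(-u) ≤ 2 e^(-u/2)`, so both `p_t(x)` and the time derivative `∂ₜ p_t(x) = (u - d/2) p_t(x) / t`
are dominated by `p_{2t}(x)`, the latter with an extra factor `1/t`. For `t ≤ 2s` the mean value
theorem then gives `|p_t - p_s| ≲ ((t - s)/t) p_{2t} ≤ ((t - s)/t)^(α/2) p_{2t}`. For `t > 2s`
we have `(t - s)/t ≥ 1/2` and `(t - s)/s ≥ 1`, so the trivial bound `p_t + p_s ≲ p_{2t} + p_{2s}`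
suffices. -/

lemma Real.mul_exp_neg_le_two_mul_exp_neg_half (u : ℝ) : u * exp (-u) ≤ 2 * exp (-(u / 2)) := by
  have h : u ≤ 2 * exp (u / 2) := by linarith [add_one_le_exp (u / 2)]
  calc u * exp (-u) ≤ 2 * exp (u / 2) * exp (-u) := by gcongr
    _ = 2 * exp (-(u / 2)) := by rw [mul_assoc, ← exp_add]; ring_nf

section

variable {d : ℕ} {α s t : ℝ} {x : EuclideanSpace ℝ (Fin d)}

lemma heatKernel_pos (ht : 0 < t) : 0 < heatKernel d t x := by
  unfold heatKernel; positivity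

lemma heatKernel_eq_div_rpow_mul (hs : 0 < s) (ht : 0 < t) :
    heatKernel d s x
      = (t / s) ^ ((d : ℝ) / 2) * (4 * π * t) ^ (-(d : ℝ) / 2) * exp (-‖x‖ ^ 2 / (4 * s)) := by
  rw [heatKernel, show 4 * π * s = (t / s)⁻¹ * (4 * π * t) by field_simp,
    mul_rpow (by positivity) (by positivity), inv_rpow (by positivity), neg_div,
    rpow_neg (by positivity), inv_inv]

lemma heatKernel_le_div_rpow_mul (hs : 0 < s) (hst : s ≤ t) :
    heatKernel d s x ≤ (t / s) ^ ((d : ℝ) / 2) * heatKernel d t x := by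
  have ht : 0 < t := hs.trans_le hst
  have hexp : -‖x‖ ^ 2 / (4 * s) ≤ -‖x‖ ^ 2 / (4 * t) := by
    rw [neg_div, neg_div, neg_le_neg_iff]; gcongr
  rw [heatKernel_eq_div_rpow_mul hs ht, heatKernel, mul_assoc]
  gcongr

lemma heatKernel_le_two_rpow_mul (ht : 0 < t) :
    heatKernel d t x ≤ 2 ^ ((d : ℝ) / 2) * heatKernel d (2 * t) x := by
  simpa [ht.ne'] using heatKernel_le_div_rpow_mul (d := d) (x := x) ht (by linarith : t ≤ 2 * t)

lemma sq_norm_div_mul_heatKernel_le (ht : 0 < t) :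
    ‖x‖ ^ 2 / (4 * t) * heatKernel d t x ≤ 2 * 2 ^ ((d : ℝ) / 2) * heatKernel d (2 * t) x := by
  have hu := mul_exp_neg_le_two_mul_exp_neg_half (‖x‖ ^ 2 / (4 * t))
  rw [heatKernel_eq_div_rpow_mul ht (by positivity : 0 < 2 * t), heatKernel,
    mul_div_cancel_right₀ _ ht.ne', show -‖x‖ ^ 2 / (4 * (2 * t)) = -(‖x‖ ^ 2 / (4 * t) / 2) by ring,
    show -‖x‖ ^ 2 / (4 * t) = -(‖x‖ ^ 2 / (4 * t)) by ring]
  calc _ = 2 ^ ((d : ℝ) / 2) * (4 * π * (2 * t)) ^ (-(d : ℝ) / 2)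
        * (‖x‖ ^ 2 / (4 * t) * exp (-(‖x‖ ^ 2 / (4 * t)))) := by ring
    _ ≤ 2 ^ ((d : ℝ) / 2) * (4 * π * (2 * t)) ^ (-(d : ℝ) / 2)
        * (2 * exp (-(‖x‖ ^ 2 / (4 * t) / 2))) := by gcongr
    _ = _ := by ring

lemma hasDerivAt_heatKernel (ht : 0 < t) :
    HasDerivAt (fun r ↦ heatKernel d r x) ((‖x‖ ^ 2 / (4 * t) - d / 2) / t * heatKernel d t x) t := by
  have h1 : HasDerivAt (fun r ↦ (4 * π * r) ^ (-(d : ℝ) / 2))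
      (4 * π * (-(d : ℝ) / 2) * (4 * π * t) ^ (-(d : ℝ) / 2 - 1)) t := by
    simpa using ((hasDerivAt_id t).const_mul (4 * π)).rpow_const (p := -(d : ℝ) / 2)
      (by left; simp; positivity)
  have h2 : HasDerivAt (fun r ↦ -‖x‖ ^ 2 / (4 * r)) (‖x‖ ^ 2 / (4 * t ^ 2)) t := by
    have hfun : (fun r ↦ -‖x‖ ^ 2 / (4 * r)) = fun r ↦ -‖x‖ ^ 2 / 4 * r⁻¹ := by
      funext r; ring
    rw [hfun]
    exact ((hasDerivAt_inv ht.ne').const_mul _).congr_deriv (by ring)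
  refine (h1.mul h2.exp).congr_deriv ?_
  rw [rpow_sub_one (by positivity)]
  unfold heatKernel
  field_simp
  ring

lemma abs_deriv_heatKernel_le (ht : 0 < t) :
    |(‖x‖ ^ 2 / (4 * t) - d / 2) / t * heatKernel d t x|
      ≤ (d / 2 + 2) * 2 ^ ((d : ℝ) / 2) / t * heatKernel d (2 * t) x := by
  have hp := (heatKernel_pos (d := d) (x := x) ht).le
  have h1 := sq_norm_div_mul_heatKernel_le (d := d) (x := x) ht
  have h2 := heatKernel_le_two_rpow_mul (d := d) (x := x) ht
  have hu : |‖x‖ ^ 2 / (4 * t) - d / 2| ≤ ‖x‖ ^ 2 / (4 * t) + d / 2 :=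
    (abs_sub _ _).trans_eq (by rw [abs_of_nonneg (by positivity), abs_of_nonneg (by positivity)])
  have key : |‖x‖ ^ 2 / (4 * t) - d / 2| * heatKernel d t x
      ≤ (d / 2 + 2) * 2 ^ ((d : ℝ) / 2) * heatKernel d (2 * t) x :=
    calc |‖x‖ ^ 2 / (4 * t) - d / 2| * heatKernel d t x
        ≤ (‖x‖ ^ 2 / (4 * t) + d / 2) * heatKernel d t x := by gcongr
      _ = ‖x‖ ^ 2 / (4 * t) * heatKernel d t x + d / 2 * heatKernel d t x := by ring
      _ ≤ 2 * 2 ^ ((d : ℝ) / 2) * heatKernel d (2 * t) x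
          + d / 2 * (2 ^ ((d : ℝ) / 2) * heatKernel d (2 * t) x) := by gcongr
      _ = (d / 2 + 2) * 2 ^ ((d : ℝ) / 2) * heatKernel d (2 * t) x := by ring
  rw [abs_mul, abs_div, abs_of_pos ht, abs_of_nonneg hp, div_mul_eq_mul_div, div_mul_eq_mul_div]
  exact div_le_div_of_nonneg_right key ht.le

lemma abs_heatKernel_sub_le_of_le_two_mul (hs : 0 < s) (hst : s ≤ t) (ht2 : t ≤ 2 * s) :
    |heatKernel d t x - heatKernel d s x|
      ≤ (d + 4) * 2 ^ d * ((t - s) / t) * heatKernel d (2 * t) x := by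
  have ht : 0 < t := hs.trans_le hst
  have h2d : (2 : ℝ) ^ ((d : ℝ) / 2) * 2 ^ ((d : ℝ) / 2) = 2 ^ d := by
    rw [← rpow_add two_pos, add_halves, rpow_natCast]
  have bound : ∀ r ∈ Set.Ico s t, ‖(‖x‖ ^ 2 / (4 * r) - d / 2) / r * heatKernel d r x‖
      ≤ (d + 4) * 2 ^ d / t * heatKernel d (2 * t) x := by
    rintro r ⟨hsr, hrt⟩
    have hr : 0 < r := hs.trans_le hsr
    have hp : 0 ≤ heatKernel d (2 * r) x := (heatKernel_pos (by positivity)).le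
    have hratio : (2 * t / (2 * r)) ^ ((d : ℝ) / 2) ≤ 2 ^ ((d : ℝ) / 2) := by
      gcongr; rw [div_le_iff₀ (by positivity)]; linarith
    calc ‖(‖x‖ ^ 2 / (4 * r) - d / 2) / r * heatKernel d r x‖
        ≤ (d / 2 + 2) * 2 ^ ((d : ℝ) / 2) / r * heatKernel d (2 * r) x := abs_deriv_heatKernel_le hr
      _ ≤ (d / 2 + 2) * 2 ^ ((d : ℝ) / 2) / (t / 2)
          * (2 ^ ((d : ℝ) / 2) * heatKernel d (2 * t) x) := by
          gcongr
          · linarith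
          · exact (heatKernel_le_div_rpow_mul (t := 2 * t) (by positivity) (by linarith)).trans
              (mul_le_mul_of_nonneg_right hratio (heatKernel_pos (by positivity)).le)
      _ = (d + 4) * 2 ^ d / t * heatKernel d (2 * t) x := by rw [← h2d]; field_simp; ring
  have hderiv : ∀ r ∈ Set.Icc s t, HasDerivWithinAt (fun r ↦ heatKernel d r x)
      ((‖x‖ ^ 2 / (4 * r) - d / 2) / r * heatKernel d r x) (Set.Icc s t) r :=
    fun r hr ↦ (hasDerivAt_heatKernel (hs.trans_le hr.1)).hasDerivWithinAt
  have hmvt := norm_image_sub_le_of_norm_deriv_le_segment' hderiv bound t ⟨hst, le_rfl⟩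
  rw [Real.norm_eq_abs] at hmvt
  exact hmvt.trans_eq (by field_simp)

lemma abs_heatKernel_sub_le_two_rpow_mul_add (hs : 0 < s) (ht : 0 < t) :
    |heatKernel d t x - heatKernel d s x|
      ≤ 2 ^ ((d : ℝ) / 2) * (heatKernel d (2 * t) x + heatKernel d (2 * s) x) := by
  calc |heatKernel d t x - heatKernel d s x| ≤ heatKernel d t x + heatKernel d s x :=
        (abs_sub _ _).trans_eq (by rw [abs_of_pos (heatKernel_pos ht), abs_of_pos (heatKernel_pos hs)])
    _ ≤ 2 ^ ((d : ℝ) / 2) * heatKernel d (2 * t) x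
          + 2 ^ ((d : ℝ) / 2) * heatKernel d (2 * s) x :=
        add_le_add (heatKernel_le_two_rpow_mul ht) (heatKernel_le_two_rpow_mul hs)
    _ = _ := by ring

lemma abs_heatKernel_sub_le_rpow (hα0 : 0 ≤ α) (hα2 : α ≤ 2) (hs : 0 < s) (hst : s < t) :
    |heatKernel d t x - heatKernel d s x| ≤ (d + 4) * 2 ^ d *
      (((t - s) / t) ^ (α / 2) * heatKernel d (2 * t) x
        + ((t - s) / s) ^ (α / 2) * heatKernel d (2 * s) x) := by
  have ht : 0 < t := hs.trans hst
  have hpt : 0 < heatKernel d (2 * t) x := heatKernel_pos (by positivity)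
  have hps : 0 < heatKernel d (2 * s) x := heatKernel_pos (by positivity)
  have hrt : (t - s) / t ≤ ((t - s) / t) ^ (α / 2) :=
    self_le_rpow_of_le_one (div_nonneg (by linarith) ht.le)
      ((div_le_one ht).mpr (by linarith)) (by linarith)
  have hrs : 0 ≤ ((t - s) / s) ^ (α / 2) := by positivity
  rcases le_or_gt t (2 * s) with hclose | hfar
  · calc |heatKernel d t x - heatKernel d s x|
        ≤ (d + 4) * 2 ^ d * ((t - s) / t) * heatKernel d (2 * t) x :=
          abs_heatKernel_sub_le_of_le_two_mul hs hst.le hclose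
      _ ≤ (d + 4) * 2 ^ d * (((t - s) / t) ^ (α / 2) * heatKernel d (2 * t) x
          + ((t - s) / s) ^ (α / 2) * heatKernel d (2 * s) x) := by
        rw [mul_assoc]; gcongr; nlinarith [mul_nonneg hrs hps.le]
  · have hrt_half : 1 / 2 ≤ ((t - s) / t) ^ (α / 2) :=
      le_trans (by rw [le_div_iff₀ ht]; linarith) hrt
    have hrs_one : 1 ≤ ((t - s) / s) ^ (α / 2) :=
      one_le_rpow ((one_le_div hs).mpr (by linarith)) (by linarith)
    have hpow : 2 * 2 ^ ((d : ℝ) / 2) ≤ (d + 4) * (2 : ℝ) ^ d := by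
      have hd : (0 : ℝ) ≤ d := d.cast_nonneg
      have h2 : (2 : ℝ) ^ ((d : ℝ) / 2) ≤ 2 ^ d := by
        rw [← rpow_natCast]; exact rpow_le_rpow_of_exponent_le one_le_two (by linarith)
      nlinarith [pow_pos (two_pos : (0 : ℝ) < 2) d]
    calc |heatKernel d t x - heatKernel d s x|
        ≤ 2 ^ ((d : ℝ) / 2) * (heatKernel d (2 * t) x + heatKernel d (2 * s) x) :=
          abs_heatKernel_sub_le_two_rpow_mul_add hs ht
      _ ≤ 2 * 2 ^ ((d : ℝ) / 2) * (((t - s) / t) ^ (α / 2) * heatKernel d (2 * t) x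
          + ((t - s) / s) ^ (α / 2) * heatKernel d (2 * s) x) := by
        have hsum : heatKernel d (2 * t) x + heatKernel d (2 * s) x
            ≤ 2 * (((t - s) / t) ^ (α / 2) * heatKernel d (2 * t) x
              + ((t - s) / s) ^ (α / 2) * heatKernel d (2 * s) x) := by
          nlinarith
        linarith [mul_le_mul_of_nonneg_left hsum (rpow_nonneg zero_le_two ((d : ℝ) / 2))]
      _ ≤ _ := by gcongr

end

theorem stmt_7_general (d : ℕ) (α T : ℝ) (hα0 : 0 < α) (hα1 : α < 1) :
    ∃ c : ℝ, 0 < c ∧ ∀ s t : ℝ, 0 < s → s < t → t ≤ T → ∀ x : EuclideanSpace ℝ (Fin d),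
      |heatKernel d t x - heatKernel d s x| ≤
        c * (t - s) ^ (α / 2) *
          (t ^ (-α / 2) * heatKernel d (2 * t) x + s ^ (-α / 2) * heatKernel d (2 * s) x) := by
  refine ⟨(d + 4) * 2 ^ d, by positivity, fun s t hs hst _ x ↦ ?_⟩
  have ht : 0 < t := hs.trans hst
  have hscale : ∀ r, 0 < r → (t - s) ^ (α / 2) * r ^ (-α / 2) = ((t - s) / r) ^ (α / 2) := by
    intro r hr
    rw [div_rpow (by linarith) hr.le, neg_div, rpow_neg hr.le]
    ring
  rw [mul_assoc, mul_add, ← mul_assoc, ← mul_assoc, hscale t ht, hscale s hs]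
  exact abs_heatKernel_sub_le_rpow hα0.le (by linarith) hs hst

theorem stmt_7 (d : ℕ) (α T : ℝ) (hα0 : 0 < α) (hα1 : α < 1) (hT : 0 < T) :
    ∃ c : ℝ, 0 < c ∧ ∀ s t : ℝ, 0 < s → s < t → t ≤ T → ∀ x : EuclideanSpace ℝ (Fin d),
      |heatKernel d t x - heatKernel d s x| ≤
        c * (t - s) ^ (α / 2) *
          (t ^ (-α / 2) * heatKernel d (2 * t) x + s ^ (-α / 2) * heatKernel d (2 * s) x) :=
  stmt_7_general d α T hα0 hα1
end
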